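/- Let X : [0,∞) → ℝ be a càdlàg function, S_t = sup_{s ≤ t} X_s its running supremum (assume X_0 = x ≥ 0 so S is finite), and γ : [0,∞) → [0,1) measurable. Define U_t = X_t - ∫_0^t γ(S_u) dS_u (a Lebesgue–Stieltjes integral against the nondecreasing function S). Then the running supremum S^U_t := sup_{s ≤ t} U_s satisfies S^U_t = S_t - ∫_0^t γ(S_u) dS_u for all t ≥ 0. -/

import Mathlib

/-!
Write `A t = ∫_{(0,t]} γ(S u) dS_u`. Since `0 ≤ γ(S) ≤ 1`, both `A` and `S - A` are
nondecreasing. Hence for `s ≤ t`, `U s ≤ S s - A s ≤ S t - A t`, while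
`X s = U s + A s ≤ S^U_t + A t` gives `S t ≤ S^U_t + A t`. The càdlàg hypotheses serve only to
bound `X` above on compact intervals, so that the suprema are not junk values.
-/

open MeasureTheory Set Filter Topology

theorem bddAbove_image_Icc_of_cadlag {α : Type*} [LinearOrder α]
    [TopologicalSpace α] [OrderTopology α] {X : ℝ → α} {a b : ℝ}
    (hright : ∀ t, ContinuousWithinAt X (Ici t) t)
    (hleft : ∀ t, a < t → ∃ l, Tendsto X (𝓝[<] t) (𝓝 l)) :
    BddAbove (X '' Icc a b) := by
  refine isCompact_Icc.induction_on (p := fun s => BddAbove (X '' s)) ⟨X a, by simp⟩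
    (fun s t hst ht => ht.mono (image_mono hst))
    (fun s t hs ht => by simpa only [image_union, bddAbove_union] using ⟨hs, ht⟩)
    (fun c hc => ?_)
  have hright_bdd := (hright c).tendsto.isBoundedUnder_le
  have hbdd : (𝓝[Icc a b] c).IsBoundedUnder (· ≤ ·) X := by
    rcases hc.1.eq_or_lt with rfl | hac
    · exact hright_bdd.mono (nhdsWithin_mono _ Icc_subset_Ici_self)
    · obtain ⟨l, hl⟩ := hleft c hac
      refine IsBounded.mono (map_mono nhdsWithin_le_nhds) ?_
      rw [← nhdsLT_sup_nhdsGE, map_sup]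
      exact isBounded_sup hl.isBoundedUnder_le hright_bdd
  obtain ⟨t, ht, hmem⟩ := isBoundedUnder_iff_eventually_bddAbove.1 hbdd
  exact ⟨t, hmem, ht⟩

theorem setIntegral_Ioc_sub_setIntegral_Ioc {μ : Measure ℝ} {f : ℝ → ℝ} {a s t : ℝ}
    (has : a ≤ s) (hst : s ≤ t) (hf : IntegrableOn f (Ioc a t) μ) :
    ∫ u in Ioc a t, f u ∂μ - ∫ u in Ioc a s, f u ∂μ = ∫ u in Ioc s t, f u ∂μ := by
  rw [← Ioc_union_Ioc_eq_Ioc has hst, setIntegral_union (Ioc_disjoint_Ioc_of_le le_rfl)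
    measurableSet_Ioc (hf.mono_set (Ioc_subset_Ioc_right hst))
    (hf.mono_set (Ioc_subset_Ioc_left has)), add_sub_cancel_left]

namespace StieltjesFunction

variable (S : StieltjesFunction ℝ) {f : ℝ → ℝ} {a s t : ℝ}

theorem integrableOn_Ioc_of_mem_Icc (hf : Measurable f)
    (hf01 : ∀ u ∈ Ioc s t, f u ∈ Icc 0 1) :
    IntegrableOn f (Ioc s t) S.measure := by
  refine Measure.integrableOn_of_bounded (M := 1) measure_Ioc_lt_top.ne
    hf.aestronglyMeasurable ((ae_restrict_iff' measurableSet_Ioc).2 (ae_of_all _ fun u hu => ?_))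
  obtain ⟨h0, h1⟩ := hf01 u hu
  rw [Real.norm_eq_abs, abs_le]
  constructor <;> linarith

theorem setIntegral_Ioc_le_sub (hst : s ≤ t) (hf : IntegrableOn f (Ioc s t) S.measure)
    (hf1 : ∀ u ∈ Ioc s t, f u ≤ 1) : ∫ u in Ioc s t, f u ∂S.measure ≤ S t - S s :=
  calc ∫ u in Ioc s t, f u ∂S.measure
      ≤ ∫ _ in Ioc s t, (1 : ℝ) ∂S.measure :=
        setIntegral_mono_on hf (integrableOn_const measure_Ioc_lt_top.ne) measurableSet_Ioc hf1
    _ = S t - S s := by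
        rw [setIntegral_const, measureReal_def, S.measure_Ioc, smul_eq_mul, mul_one,
          ENNReal.toReal_ofReal (sub_nonneg.2 (S.mono hst))]

variable (hf : Measurable f) (hf01 : ∀ u ∈ Ioi a, f u ∈ Icc 0 1)
include hf hf01

theorem monotoneOn_setIntegral_Ioc :
    MonotoneOn (fun t => ∫ u in Ioc a t, f u ∂S.measure) (Ici a) := by
  intro s hs t _ hst
  exact setIntegral_mono_set (S.integrableOn_Ioc_of_mem_Icc (t := t) hf fun u hu => hf01 u hu.1)
    ((ae_restrict_iff' measurableSet_Ioc).2 (ae_of_all _ fun u hu => (hf01 u hu.1).1))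
    (Ioc_subset_Ioc_right hst).eventuallyLE

theorem monotoneOn_sub_setIntegral_Ioc :
    MonotoneOn (fun t => S t - ∫ u in Ioc a t, f u ∂S.measure) (Ici a) := by
  intro s hs t _ hst
  have hint := S.integrableOn_Ioc_of_mem_Icc (t := t) hf fun u hu => hf01 u hu.1
  have hincr := S.setIntegral_Ioc_le_sub hst (hint.mono_set (Ioc_subset_Ioc_left hs))
    fun u hu => (hf01 u (lt_of_le_of_lt hs hu.1)).2
  rw [← setIntegral_Ioc_sub_setIntegral_Ioc hs hst hint] at hincr
  dsimp only
  linarith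

end StieltjesFunction

theorem ciSup_Icc_sub_eq_of_monotoneOn {X S A : ℝ → ℝ} {a t : ℝ} (hat : a ≤ t)
    (hX : BddAbove (X '' Icc a t)) (hS : ∀ s ∈ Icc a t, S s = ⨆ r : Icc a s, X r)
    (hA : MonotoneOn A (Icc a t)) (hSA : MonotoneOn (fun s => S s - A s) (Icc a t)) :
    ⨆ s : Icc a t, (X s - A s) = S t - A t := by
  have hXS : ∀ s ∈ Icc a t, X s ≤ S s := fun s hs => by
    rw [hS s hs]
    exact le_ciSup_set (hX.mono (image_mono (Icc_subset_Icc_right hs.2))) ⟨hs.1, le_rfl⟩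
  have hbdd : BddAbove (range fun s : Icc a t => X s - A s) := by
    refine ⟨S t - A t, forall_mem_range.2 fun ⟨s, hs⟩ => ?_⟩
    linarith [hXS s hs, hSA hs (right_mem_Icc.2 hat) hs.2]
  have : Nonempty (Icc a t) := ⟨⟨a, left_mem_Icc.2 hat⟩⟩
  refine le_antisymm (ciSup_le fun ⟨s, hs⟩ => ?_) ?_
  · linarith [hXS s hs, hSA hs (right_mem_Icc.2 hat) hs.2]
  · rw [hS t (right_mem_Icc.2 hat), sub_le_iff_le_add]
    refine ciSup_le fun ⟨s, hs⟩ => ?_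
    linarith [le_ciSup hbdd ⟨s, hs⟩, hA hs (right_mem_Icc.2 hat) hs.2]

/-- Let `X` be a càdlàg function with `X 0 = x ≥ 0`, `S` its running
supremum (packaged as a Stieltjes function), `γ : [0,∞) → [0,1)` measurable, and
`U t = X t - ∫_0^t γ(S u) dS_u` (Lebesgue–Stieltjes integral). Then the running
supremum of `U` satisfies `S^U_t = S t - ∫_0^t γ(S u) dS_u` for all `t ≥ 0`. -/
theorem running_sup_of_taxed_process
    (X : ℝ → ℝ) (x : ℝ) (hx : 0 ≤ x) (hX0 : X 0 = x)
    (hXright : ∀ t, ContinuousWithinAt X (Set.Ici t) t)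
    (hXleft : ∀ t, 0 < t → ∃ l, Tendsto X (nhdsWithin t (Set.Iio t)) (nhds l))
    (S : StieltjesFunction ℝ)
    (hS : ∀ t, 0 ≤ t → S t = ⨆ s : Set.Icc (0:ℝ) t, X s)
    (γ : ℝ → ℝ) (hmeas : Measurable γ)
    (hγ0 : ∀ y, 0 ≤ y → 0 ≤ γ y) (hγ1 : ∀ y, 0 ≤ y → γ y < 1)
    (U SU : ℝ → ℝ)
    (hU : ∀ t, U t = X t - ∫ u in Set.Ioc (0:ℝ) t, γ (S u) ∂S.measure)
    (hSU : ∀ t, SU t = ⨆ s : Set.Icc (0:ℝ) t, U s) :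
    ∀ t, 0 ≤ t → SU t = S t - ∫ u in Set.Ioc (0:ℝ) t, γ (S u) ∂S.measure := by
  intro t ht
  have hXbdd (t : ℝ) : BddAbove (X '' Icc 0 t) := bddAbove_image_Icc_of_cadlag hXright hXleft
  have hS_nonneg (u : ℝ) (hu : 0 ≤ u) : 0 ≤ S u := by
    rw [hS u hu]
    exact hx.trans (hX0 ▸ le_ciSup_set (hXbdd u) ⟨le_rfl, hu⟩)
  have hγS : ∀ u ∈ Ioi 0, γ (S u) ∈ Icc 0 1 := fun u hu =>
    ⟨hγ0 _ (hS_nonneg u hu.le), (hγ1 _ (hS_nonneg u hu.le)).le⟩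
  have hγS_meas : Measurable fun u => γ (S u) := hmeas.comp S.mono.measurable
  simp only [hSU, hU]
  exact ciSup_Icc_sub_eq_of_monotoneOn ht (hXbdd t) (fun s hs => hS s hs.1)
    ((S.monotoneOn_setIntegral_Ioc hγS_meas hγS).mono Icc_subset_Ici_self)
    ((S.monotoneOn_sub_setIntegral_Ioc hγS_meas hγS).mono Icc_subset_Ici_self)
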